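/- arXiv:1707.00270 — 3 statements merged into one kernel-verified Lean document; each statement's English description precedes it below -/
import Mathlib

section
/- Let T ⊆ [0,1]^Ω be a family of fuzzy sets containing the zero function, such that: (a) whenever a ∈ T is a characteristic function and f ∈ T satisfies f ≤ a, then a − f ∈ T; (b) whenever (f_n) is a sequence in T all dominated by a characteristic function a ∈ T, the function ω ↦ min(∑_n f_n(ω), a(ω)) belongs to T. Then for every nondecreasing sequence (f_n) in T dominated by a characteristic function a ∈ T, the pointwise supremum f(ω) = sup_n f_n(ω) belongs to T. -/
open scoped ENNReal

/-- An EMV-tribe is closed under bounded nondecreasing pointwise suprema. -/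
theorem stmt_6 {Ω : Type*} [Nonempty Ω] (T : Set (Ω → ℝ≥0∞))
    (hrange : ∀ f ∈ T, ∀ ω, f ω ≤ 1)
    (h0 : (fun _ => (0:ℝ≥0∞)) ∈ T)
    (hsub : ∀ a ∈ T, (∀ ω, a ω = 0 ∨ a ω = 1) →
      ∀ f ∈ T, (∀ ω, f ω ≤ a ω) → (fun ω => a ω - f ω) ∈ T)
    (hsum : ∀ f : ℕ → Ω → ℝ≥0∞, (∀ n, f n ∈ T) →
      ∀ a ∈ T, (∀ ω, a ω = 0 ∨ a ω = 1) → (∀ n ω, f n ω ≤ a ω) →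
        (fun ω => min (∑' n, f n ω) (a ω)) ∈ T) :
    ∀ f : ℕ → Ω → ℝ≥0∞, (∀ n, f n ∈ T) → Monotone f →
      ∀ a ∈ T, (∀ ω, a ω = 0 ∨ a ω = 1) → (∀ n ω, f n ω ≤ a ω) →
        (fun ω => ⨆ n, f n ω) ∈ T := by
  intro f hf hmono a ha hachar hfa
  -- Step 1: general truncated subtraction below a
  have hsub2 : ∀ g ∈ T, ∀ h ∈ T, (∀ ω, h ω ≤ g ω) → (∀ ω, g ω ≤ a ω) →
      (fun ω => g ω - h ω) ∈ T := by
    intro g hg h hh hhg hga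
    have hha : ∀ ω, h ω ≤ a ω := fun ω => (hhg ω).trans (hga ω)
    set s : ℕ → Ω → ℝ≥0∞ := fun n => if n = 0 then (fun ω => a ω - g ω)
      else if n = 1 then h else fun _ => 0 with hs
    have hsT : ∀ n, s n ∈ T := by
      intro n
      rcases n with _ | _ | n <;> simp [hs]
      · exact hsub a ha hachar g hg hga
      · exact hh
      · exact h0
    have hsa : ∀ n ω, s n ω ≤ a ω := by
      intro n ω
      rcases n with _ | _ | n
      · simpa [hs] using tsub_le_self
      · simpa [hs] using hha ω
      · simp [hs]
    have hsum' := hsum s hsT a ha hachar hsa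
    have htsum : ∀ ω, ∑' n, s n ω = (a ω - g ω) + h ω := by
      intro ω
      have : ∑' n, s n ω = ∑ n ∈ ({0, 1} : Finset ℕ), s n ω := by
        apply tsum_eq_sum
        intro n hn
        rcases n with _ | _ | n
        · simp at hn
        · simp at hn
        · simp [hs]
      rw [this]
      simp [hs]
    have hle : ∀ ω, (a ω - g ω) + h ω ≤ a ω := by
      intro ω
      calc (a ω - g ω) + h ω ≤ (a ω - g ω) + g ω := by gcongr; exact hhg ω
        _ = a ω := tsub_add_cancel_of_le (hga ω)
    have heq : (fun ω => min (∑' n, s n ω) (a ω)) = fun ω => (a ω - g ω) + h ω := by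
      funext ω; rw [htsum ω, min_eq_left (hle ω)]
    rw [heq] at hsum'
    have hfinal := hsub a ha hachar _ hsum' hle
    have : (fun ω => a ω - ((a ω - g ω) + h ω)) = fun ω => g ω - h ω := by
      funext ω
      rw [tsub_add_eq_tsub_tsub, ENNReal.sub_sub_cancel _ (hga ω)]
      rcases hachar ω with h0' | h1'
      · simp [h0']
      · simp [h1']
    rwa [this] at hfinal
  -- Step 2: telescoping increments
  set g : ℕ → Ω → ℝ≥0∞ := fun n => match n with
    | 0 => f 0
    | n + 1 => fun ω => f (n+1) ω - f n ω with hgdef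
  have hgT : ∀ n, g n ∈ T := by
    intro n
    cases n with
    | zero => exact hf 0
    | succ n =>
      exact hsub2 (f (n+1)) (hf (n+1)) (f n) (hf n)
        (fun ω => hmono (Nat.le_succ n) ω) (fun ω => hfa (n+1) ω)
  have hga : ∀ n ω, g n ω ≤ a ω := by
    intro n ω
    cases n with
    | zero => exact hfa 0 ω
    | succ n => exact le_trans tsub_le_self (hfa (n+1) ω)
  have hpart : ∀ N ω, ∑ k ∈ Finset.range (N+1), g k ω = f N ω := by
    intro N ω
    induction N with
    | zero => simp [hgdef]
    | succ N ih =>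
      rw [Finset.sum_range_succ, ih]
      show f N ω + (f (N+1) ω - f N ω) = f (N+1) ω
      rw [add_tsub_cancel_of_le (hmono (Nat.le_succ N) ω)]
  have htsum : ∀ ω, ∑' n, g n ω = ⨆ n, f n ω := by
    intro ω
    rw [ENNReal.tsum_eq_iSup_sum]
    apply le_antisymm
    · apply iSup_le
      intro F
      obtain ⟨N, hN⟩ := F.exists_le
      calc ∑ k ∈ F, g k ω ≤ ∑ k ∈ Finset.range (N+1), g k ω := by
            apply Finset.sum_le_sum_of_subset
            intro x hx
            exact Finset.mem_range.mpr (Nat.lt_succ_of_le (hN x hx))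
        _ = f N ω := hpart N ω
        _ ≤ ⨆ n, f n ω := le_iSup (fun n => f n ω) N
    · apply iSup_le
      intro n
      calc f n ω = ∑ k ∈ Finset.range (n+1), g k ω := (hpart n ω).symm
        _ ≤ ⨆ F : Finset ℕ, ∑ k ∈ F, g k ω := le_iSup (fun F : Finset ℕ => ∑ k ∈ F, g k ω) (Finset.range (n+1))
  have hsum' := hsum g hgT a ha hachar hga
  have heq : (fun ω => min (∑' n, g n ω) (a ω)) = fun ω => ⨆ n, f n ω := by
    funext ω
    rw [htsum ω, min_eq_left (iSup_le fun n => hfa n ω)]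
  rwa [heq] at hsum'
end

section
/- Let T ⊆ [0,1]^Ω satisfy: 0 ∈ T; T is closed under pointwise min of pairs; if a ∈ T is a characteristic function and f ∈ T with f ≤ a, then a − f ∈ T; and T is closed under countable truncated sums of sequences dominated by a characteristic function in T. Then for every sequence (g_n) in T dominated by a common characteristic function a ∈ T, the pointwise infimum g(ω) = inf_n g_n(ω) belongs to T. -/
open scoped ENNReal

/-- An EMV-tribe is closed under pointwise countable infima of sequences
dominated by a common characteristic function. -/
theorem stmt_7 {Ω : Type*} [Nonempty Ω] (T : Set (Ω → ℝ≥0∞))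
    (hrange : ∀ f ∈ T, ∀ ω, f ω ≤ 1)
    (h0 : (fun _ => (0:ℝ≥0∞)) ∈ T)
    (hmin : ∀ f ∈ T, ∀ g ∈ T, (fun ω => min (f ω) (g ω)) ∈ T)
    (hsub : ∀ a ∈ T, (∀ ω, a ω = 0 ∨ a ω = 1) →
      ∀ f ∈ T, (∀ ω, f ω ≤ a ω) → (fun ω => a ω - f ω) ∈ T)
    (hsum : ∀ f : ℕ → Ω → ℝ≥0∞, (∀ n, f n ∈ T) →
      ∀ a ∈ T, (∀ ω, a ω = 0 ∨ a ω = 1) → (∀ n ω, f n ω ≤ a ω) →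
        (fun ω => min (∑' n, f n ω) (a ω)) ∈ T) :
    ∀ g : ℕ → Ω → ℝ≥0∞, (∀ n, g n ∈ T) →
      ∀ a ∈ T, (∀ ω, a ω = 0 ∨ a ω = 1) → (∀ n ω, g n ω ≤ a ω) →
        (fun ω => ⨅ n, g n ω) ∈ T := by
  intro g hg a haT ha01 hga
  -- truncated sum of two elements
  have hsum2 : ∀ x ∈ T, ∀ y ∈ T, (∀ ω, x ω ≤ a ω) → (∀ ω, y ω ≤ a ω) →
      (fun ω => min (x ω + y ω) (a ω)) ∈ T := by
    intro x hx y hy hxa hya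
    have key := hsum (fun n => if n = 0 then x else if n = 1 then y else fun _ => 0)
      (by
        intro n
        rcases n with _ | _ | n <;> simp [hx, hy, h0])
      a haT ha01
      (by
        intro n ω
        rcases n with _ | _ | n <;> simp [hxa ω, hya ω])
    have heq : ∀ ω, (∑' n, (if n = 0 then x else if n = 1 then y else fun _ => (0:ℝ≥0∞)) ω)
        = x ω + y ω := by
      intro ω
      rw [tsum_eq_sum (s := Finset.range 2) (by
        intro b hb
        rcases b with _ | _ | b
        · simp at hb
        · simp at hb
        · simp)]
      simp [Finset.sum_range_succ]
    simpa only [heq] using key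
  -- truncated subtraction stays in T
  have hsub2 : ∀ x ∈ T, ∀ y ∈ T, (∀ ω, x ω ≤ a ω) → (∀ ω, y ω ≤ a ω) →
      (fun ω => x ω - y ω) ∈ T := by
    intro x hx y hy hxa hya
    have hax : (fun ω => a ω - x ω) ∈ T := hsub a haT ha01 x hx hxa
    have hmid : (fun ω => min ((a ω - x ω) + y ω) (a ω)) ∈ T :=
      hsum2 _ hax y hy (fun ω => tsub_le_self) hya
    have hres := hsub a haT ha01 _ hmid (fun ω => min_le_right _ _)
    have heq : (fun ω => a ω - min ((a ω - x ω) + y ω) (a ω)) = fun ω => x ω - y ω := by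
      funext ω
      rcases ha01 ω with h | h
      · have hx0 : x ω = 0 := le_antisymm (h ▸ hxa ω) zero_le
        have hy0 : y ω = 0 := le_antisymm (h ▸ hya ω) zero_le
        simp [h, hx0, hy0]
      · have hx1 : x ω ≤ 1 := h ▸ hxa ω
        rw [h]
        rcases le_total (x ω) (y ω) with hxy | hyx
        · have h1 : (1:ℝ≥0∞) ≤ (1 - x ω) + y ω := by
            calc (1:ℝ≥0∞) = (1 - x ω) + x ω := (tsub_add_cancel_of_le hx1).symm
            _ ≤ (1 - x ω) + y ω := add_le_add_right hxy _
          rw [min_eq_right h1, tsub_self, tsub_eq_zero_of_le hxy]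
        · have h1 : (1 - x ω) + y ω ≤ 1 := by
            calc (1 - x ω) + y ω ≤ (1 - x ω) + x ω := add_le_add_right hyx _
            _ = 1 := tsub_add_cancel_of_le hx1
          rw [min_eq_left h1, tsub_add_eq_tsub_tsub,
            ENNReal.sub_sub_cancel ENNReal.one_ne_top hx1]
    rwa [heq] at hres
  -- running minima
  let m : ℕ → Ω → ℝ≥0∞ := fun n => Nat.rec (g 0) (fun k p => fun ω => min (p ω) (g (k+1) ω)) n
  have hmS : ∀ k, m (k+1) = fun ω => min (m k ω) (g (k+1) ω) := fun k => rfl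
  have hmT : ∀ n, m n ∈ T := by
    intro n
    induction n with
    | zero => exact hg 0
    | succ k ih => exact hmin _ ih _ (hg (k+1))
  have hma : ∀ n ω, m n ω ≤ a ω := by
    intro n
    induction n with
    | zero => exact hga 0
    | succ k ih => intro ω; exact le_trans (min_le_left _ _) (ih ω)
  have hmanti : ∀ n ω, m (n+1) ω ≤ m n ω := fun n ω => min_le_left _ _
  have hmg : ∀ n ω, m n ω ≤ g n ω := by
    intro n
    induction n with
    | zero => exact fun ω => le_refl _
    | succ k ih => intro ω; exact min_le_right _ _
  have hgm : ∀ n ω, (⨅ k, g k ω) ≤ m n ω := by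
    intro n
    induction n with
    | zero => exact fun ω => iInf_le _ 0
    | succ k ih => intro ω; exact le_min (ih ω) (iInf_le _ (k+1))
  have hinf : ∀ ω, (⨅ n, m n ω) = ⨅ n, g n ω :=
    fun ω => le_antisymm (le_iInf fun n => iInf_le_of_le n (hmg n ω))
      (le_iInf fun n => hgm n ω)
  -- complements
  set f : ℕ → Ω → ℝ≥0∞ := fun n ω => a ω - m n ω with hf
  have hfT : ∀ n, f n ∈ T := fun n => hsub a haT ha01 (m n) (hmT n) (hma n)
  have hfa : ∀ n ω, f n ω ≤ a ω := fun n ω => tsub_le_self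
  have hfmono : ∀ n ω, f n ω ≤ f (n+1) ω := fun n ω => tsub_le_tsub_left (hmanti n ω) _
  -- differences
  set d : ℕ → Ω → ℝ≥0∞ := fun n => Nat.casesOn n (f 0) (fun k ω => f (k+1) ω - f k ω) with hd
  have hdT : ∀ n, d n ∈ T := by
    intro n
    cases n with
    | zero => exact hfT 0
    | succ k => exact hsub2 _ (hfT (k+1)) _ (hfT k) (hfa (k+1)) (hfa k)
  have hda : ∀ n ω, d n ω ≤ a ω := by
    intro n ω
    cases n with
    | zero => exact hfa 0 ω
    | succ k => exact le_trans tsub_le_self (hfa (k+1) ω)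
  have hpart : ∀ n ω, (∑ k ∈ Finset.range (n+1), d k ω) = f n ω := by
    intro n ω
    induction n with
    | zero => simp [hd]
    | succ k ih =>
      rw [Finset.sum_range_succ, ih]
      exact add_tsub_cancel_of_le (hfmono k ω)
  have htsum : ∀ ω, (∑' n, d n ω) = ⨆ n, f n ω := by
    intro ω
    rw [ENNReal.tsum_eq_iSup_nat]
    refine le_antisymm (iSup_le fun n => ?_) (iSup_le fun n => ?_)
    · cases n with
      | zero => simp
      | succ k => rw [hpart k ω]; exact le_iSup (fun n => f n ω) k
    · calc f n ω = ∑ k ∈ Finset.range (n+1), d k ω := (hpart n ω).symm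
        _ ≤ ⨆ n, ∑ k ∈ Finset.range n, d k ω :=
          le_iSup (fun n => ∑ k ∈ Finset.range n, d k ω) (n+1)
  have hFT : (fun ω => min (∑' n, d n ω) (a ω)) ∈ T := hsum d hdT a haT ha01 hda
  have hFeq : (fun ω => min (∑' n, d n ω) (a ω)) = fun ω => ⨆ n, f n ω := by
    funext ω
    rw [htsum ω]
    exact min_eq_left (iSup_le fun n => hfa n ω)
  rw [hFeq] at hFT
  have hres := hsub a haT ha01 _ hFT (fun ω => iSup_le fun n => hfa n ω)
  have hfin : (fun ω => a ω - ⨆ n, f n ω) = fun ω => ⨅ n, g n ω := by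
    funext ω
    rcases ha01 ω with h | h
    · have : (⨅ n, g n ω) = 0 :=
        le_antisymm (le_trans (iInf_le _ 0) (h ▸ hga 0 ω)) zero_le
      simp [h, this, zero_tsub]
    · rw [h, ENNReal.sub_iSup ENNReal.one_ne_top, ← hinf ω]
      refine iInf_congr fun n => ?_
      simp only [hf]
      rw [h, ENNReal.sub_sub_cancel ENNReal.one_ne_top (h ▸ hma n ω)]
  rwa [hfin] at hres
end

section
/- Let M be a generalized Boolean algebra and let A, B be two distinct maximal (order) ideals of M. Then there exist elements u, v ∈ M with u ∈ A, u ∉ B, v ∈ B, v ∉ A, and u ⊓ v = ⊥. -/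
/-- Distinct maximal ideals of a generalized Boolean algebra are separated
by disjoint elements. -/
theorem stmt_9 {M : Type*} [GeneralizedBooleanAlgebra M]
    (A B : Order.Ideal M) (hA : A.IsMaximal) (hB : B.IsMaximal) (hAB : A ≠ B) :
    ∃ u v : M, u ∈ A ∧ u ∉ B ∧ v ∈ B ∧ v ∉ A ∧ u ⊓ v = ⊥ := by
  have hnAB : ¬ A ≤ B := by
    intro h
    rcases lt_or_eq_of_le h with h' | h'
    · exact hB.isCoatom.1 (hA.isCoatom.2 B h')
    · exact hAB h'
  have hnBA : ¬ B ≤ A := by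
    intro h
    rcases lt_or_eq_of_le h with h' | h'
    · exact hA.isCoatom.1 (hB.isCoatom.2 A h')
    · exact hAB h'.symm
  obtain ⟨x, hxA, hxB⟩ := Set.not_subset.1 hnAB
  obtain ⟨y, hyB, hyA⟩ := Set.not_subset.1 hnBA
  refine ⟨x \ y, y \ x, A.lower sdiff_le hxA, ?_, B.lower sdiff_le hyB, ?_, sdiff_inf_sdiff⟩
  · intro h
    exact hxB (by
      have : x ⊓ y ⊔ x \ y ∈ B := B.sup_mem (B.lower inf_le_right hyB) h
      rwa [sup_inf_sdiff] at this)
  · intro h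
    exact hyA (by
      have : y ⊓ x ⊔ y \ x ∈ A := A.sup_mem (A.lower inf_le_right hxA) h
      rwa [sup_inf_sdiff] at this)
end
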